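/- Let W = (u_1,…,u_ℓ) be a fixed sequence with u_{k+1} ∈ I(u_k), and let v ∈ V with v ≠ u_1. Then the single-trial estimator satisfies s̃_W(v) = Pr[ there exists k with 2 ≤ k ≤ ℓ such that a √c-walk (v_1=v, v_2, …) from v has length at least k and v_k = u_k ]; in particular 0 ≤ s̃_W(v) ≤ 1. -/

import Mathlib

open scoped BigOperators Classical

variable {V : Type*}

/-- `p` is a possible realization of a `√c`-walk from `u`: it is nonempty,
starts at `u`, and each step moves to an in-neighbor of the current node. -/
def IsWalkFrom (I : V → Finset V) (u : V) (p : List V) : Prop :=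
  p.head? = some u ∧ List.Chain' (fun a b => b ∈ I a) p

/-- The probability that the `√c`-walk from `u` is exactly the finite sequence `p`:
`(1−√c)·∏_{k=1}^{ℓ−1} (√c/|I(u_k)|)` if `p = (u_1,…,u_ℓ)` is a walk from `u`,
and `0` otherwise. -/
noncomputable def walkWeight (I : V → Finset V) (c : ℝ) (u : V) (p : List V) : ℝ :=
  if IsWalkFrom I u p then
    (1 - Real.sqrt c) *
      ∏ k ∈ Finset.range (p.length - 1), Real.sqrt c / ((I (p.getD k u)).card : ℝ)
  else 0

/-- Deterministic PROBE scores of a reverse path, where `q` is the *reversed*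
reverse path, i.e. `q = (u_i, u_{i-1}, …, u_1)` for the reverse path
`(u_1,…,u_i)`: `Score(v,0) = 1` iff `v = u_i`, and `Score(v,j+1) = 0` if
`v = u_{i-j-1}` (which is `q[j+1]`), else `∑_{x∈I(v)} (√c/|I(v)|)·Score(x,j)`. -/
noncomputable def Score (I : V → Finset V) (c : ℝ) (q : List V) : ℕ → V → ℝ
  | 0, v => if q.head? = some v then 1 else 0
  | j + 1, v =>
      if q[j + 1]? = some v then 0
      else ∑ x ∈ I v, Real.sqrt c / ((I v).card : ℝ) * Score I c q j x

/-- The single-trial estimator `s̃_W(v) = ∑_{i=2}^{ℓ} Score^{(i)}(v, i−1)` for a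
fixed sequence `W = p`, where `Score^{(i)}` denotes the PROBE scores of the
prefix `(u_1,…,u_i)`. -/
noncomputable def estimator (I : V → Finset V) (c : ℝ) (p : List V) (v : V) : ℝ :=
  ∑ i ∈ Finset.Icc 2 p.length, Score I c ((p.take i).reverse) (i - 1) v

/-!
Unfolding the recursion that defines `Score` one step is first-step analysis for the
`√c`-walk from `v`: `Score (u_i, …, u_1) (i - 1) v` is the probability that the walk meets
`W` in matching steps for the first time at step `i`. These events are disjoint for
different `i`, and `v ≠ u_1` rules out a meeting at step `1`, so their probabilities sum
to the probability of meeting `W` at all. The walk has total mass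
`∑ₙ (1 - √c) √cⁿ = 1`, which gives both the base case of the recursion and the bound `≤ 1`.
-/

open scoped ENNReal

lemma card_mul_ofReal_div_card {α : Type*} {s : Finset α} (hs : s.Nonempty) {x : ℝ} :
    (s.card : ℝ≥0∞) * ENNReal.ofReal (x / s.card) = ENNReal.ofReal x := by
  have hcard : (0 : ℝ) < s.card := by exact_mod_cast hs.card_pos
  rw [ENNReal.ofReal_div_of_pos hcard, ENNReal.ofReal_natCast, mul_comm,
    ENNReal.div_mul_cancel (by simpa using hs.ne_empty) (by simp)]

lemma ENNReal.tsum_list_eq {α : Type*} (f : List α → ℝ≥0∞) :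
    ∑' w, f w = f [] + ∑' (a : α) (t : List α), f (a :: t) := by
  have hcons : Function.Injective (fun x : α × List α => x.1 :: x.2) :=
    fun x y h => Prod.ext (List.cons.inj h).1 (List.cons.inj h).2
  rw [ENNReal.tsum_eq_add_tsum_ite [], ← ENNReal.tsum_prod (f := fun a t => f (a :: t)),
    ← hcons.tsum_eq]
  · simp
  · intro w hw
    obtain ⟨a, t, rfl⟩ := List.exists_cons_of_ne_nil (fun h => hw (if_pos h))
    exact ⟨(a, t), rfl⟩

lemma Finset.sum_boole_first_eq_boole_exists {α M : Type*} [LinearOrder α]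
    [AddCommMonoidWithOne M] (s : Finset α) (P : α → Prop) [DecidablePred P] :
    ∑ i ∈ s, (if P i ∧ ∀ j ∈ s, j < i → ¬ P j then (1 : M) else 0) =
      if ∃ i ∈ s, P i then 1 else 0 := by
  split
  case isTrue hex =>
    have hne : (s.filter P).Nonempty := by simpa [Finset.filter_nonempty_iff] using hex
    obtain ⟨hi₀s, hi₀P⟩ := Finset.mem_filter.1 (Finset.min'_mem _ hne)
    have hfirst {i : α} (hi : i ∈ s) :
        (P i ∧ ∀ j ∈ s, j < i → ¬ P j) ↔ i = (s.filter P).min' hne := by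
      refine ⟨fun ⟨hP, hmin⟩ => le_antisymm ?_ (Finset.min'_le _ _ (Finset.mem_filter.2 ⟨hi, hP⟩)),
        fun h => ⟨h ▸ hi₀P, fun j hj hlt hP => ?_⟩⟩
      · exact not_lt.1 fun hlt => hmin _ hi₀s hlt hi₀P
      · exact not_lt.2 (Finset.min'_le _ _ (Finset.mem_filter.2 ⟨hj, hP⟩)) (h ▸ hlt)
    rw [Finset.sum_congr rfl fun i hi => if_congr (hfirst hi) rfl rfl, Finset.sum_ite_eq',
      if_pos hi₀s]
  case isFalse hnone =>
    exact Finset.sum_eq_zero fun i hi => if_neg fun h => hnone ⟨i, hi, h.1⟩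

section SqrtCWalk

variable {I : V → Finset V} {c : ℝ} {p w : List V} {v : V}

noncomputable def walkProb (I : V → Finset V) (c : ℝ) (u : V) (w : List V) : ℝ≥0∞ :=
  ENNReal.ofReal (walkWeight I c u w)

lemma walkWeight_nonneg (hc1 : c ≤ 1) (u : V) (w : List V) : 0 ≤ walkWeight I c u w := by
  unfold walkWeight
  split
  · exact mul_nonneg (sub_nonneg.2 (Real.sqrt_le_one.2 hc1))
      (Finset.prod_nonneg fun _ _ => by positivity)
  · exact le_rfl

lemma walkProb_eq_zero_of_head?_ne {u : V} (h : w.head? ≠ some u) :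
    walkProb I c u w = 0 := by
  simp [walkProb, walkWeight, IsWalkFrom, h]

@[simp]
lemma walkProb_nil (u : V) : walkProb I c u [] = 0 :=
  walkProb_eq_zero_of_head?_ne (by simp)

lemma walkProb_singleton (u : V) : walkProb I c u [u] = ENNReal.ofReal (1 - √c) := by
  rw [walkProb, walkWeight, if_pos ⟨rfl, List.isChain_singleton u⟩]
  simp

lemma walkWeight_cons_cons (u b : V) (t : List V) :
    walkWeight I c u (u :: b :: t) =
      if b ∈ I u then √c / (I u).card * walkWeight I c b (b :: t) else 0 := by
  have hwalk : IsWalkFrom I u (u :: b :: t) ↔ b ∈ I u ∧ IsWalkFrom I b (b :: t) := by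
    show (_ ∧ List.IsChain _ _) ↔ b ∈ I u ∧ (_ ∧ List.IsChain _ _)
    simp [List.isChain_cons_cons]
  have hprod : ∏ k ∈ Finset.range t.length, √c / (I ((u :: b :: t).getD (k + 1) u)).card
      = ∏ k ∈ Finset.range t.length, √c / (I ((b :: t).getD k b)).card := by
    refine Finset.prod_congr rfl fun k hk => ?_
    have hk : k < (b :: t).length := by simp at hk ⊢; omega
    rw [List.getD_cons_succ, List.getD_eq_getElem _ _ hk, List.getD_eq_getElem _ _ hk]
  by_cases hb : b ∈ I u <;> by_cases ht : IsWalkFrom I b (b :: t) <;>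
    simp only [walkWeight, hwalk, hb, ht, true_and, false_and, if_true, if_false, mul_zero,
      List.length_cons, Nat.add_sub_cancel, Finset.prod_range_succ', hprod]
  simp only [List.getD_cons_zero]
  ring

lemma walkProb_cons_cons (u b : V) (t : List V) :
    walkProb I c u (u :: b :: t) =
      if b ∈ I u then ENNReal.ofReal (√c / (I u).card) * walkProb I c b (b :: t) else 0 := by
  rw [walkProb, walkWeight_cons_cons]
  split
  · exact ENNReal.ofReal_mul (by positivity)
  · exact ENNReal.ofReal_zero

lemma tsum_walkProb_mul_eq_tsum_cons (u : V) (g : List V → ℝ≥0∞) :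
    ∑' w, walkProb I c u w * g w = ∑' t, walkProb I c u (u :: t) * g (u :: t) := by
  rw [ENNReal.tsum_list_eq, walkProb_nil, zero_mul, zero_add, tsum_eq_single u]
  intro a ha
  simp [walkProb_eq_zero_of_head?_ne (w := a :: _) (by simpa using ha)]

lemma tsum_walkProb_mul_eq (u : V) (g : List V → ℝ≥0∞) :
    ∑' w, walkProb I c u w * g w =
      ENNReal.ofReal (1 - √c) * g [u] +
        ∑ b ∈ I u, ENNReal.ofReal (√c / (I u).card) * ∑' w, walkProb I c b w * g (u :: w) := by
  rw [tsum_walkProb_mul_eq_tsum_cons, ENNReal.tsum_list_eq, walkProb_singleton,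
    tsum_eq_sum (s := I u)]
  · refine congrArg _ (Finset.sum_congr rfl fun b hb => ?_)
    simp only [walkProb_cons_cons, hb, if_true, mul_assoc, ENNReal.tsum_mul_left,
      tsum_walkProb_mul_eq_tsum_cons b (fun w => g (u :: w))]
  · intro b hb
    simp [walkProb_cons_cons, hb]

lemma tsum_walkProb_length_eq (hI : ∀ v, (I v).Nonempty) (n : ℕ) (u : V) :
    ∑' w, walkProb I c u w * (if w.length = n + 1 then 1 else 0) =
      ENNReal.ofReal (1 - √c) * ENNReal.ofReal √c ^ n := by
  induction n generalizing u with
  | zero =>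
    rw [tsum_walkProb_mul_eq u]
    simp
  | succ n ih =>
    rw [tsum_walkProb_mul_eq u]
    simp only [List.length_cons, add_left_inj, ih]
    rw [Finset.sum_const, nsmul_eq_mul, ← mul_assoc, card_mul_ofReal_div_card (hI u)]
    simp [pow_succ']
    ring

lemma tsum_walkProb_eq_one (hI : ∀ v, (I v).Nonempty) (hc1 : c < 1) (u : V) :
    ∑' w, walkProb I c u w = 1 := by
  have hsqrt : √c < 1 := by simpa using (Real.sqrt_lt' one_pos).2 (by simpa using hc1)
  have hlength (w : List V) :
      walkProb I c u w = ∑' n, walkProb I c u w * (if w.length = n + 1 then 1 else 0) := by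
    cases w with
    | nil => simp
    | cons a t => simp [eq_comm (a := t.length)]
  calc ∑' w, walkProb I c u w
      = ∑' n, ∑' w, walkProb I c u w * (if w.length = n + 1 then 1 else 0) := by
        rw [tsum_congr hlength, ENNReal.tsum_comm]
    _ = ENNReal.ofReal (1 - √c) * (1 - ENNReal.ofReal √c)⁻¹ := by
        simp only [tsum_walkProb_length_eq hI, ENNReal.tsum_mul_left, ENNReal.tsum_geometric]
    _ = 1 := by
        rw [← ENNReal.ofReal_one, ← ENNReal.ofReal_sub _ (Real.sqrt_nonneg c), ENNReal.ofReal_one]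
        exact ENNReal.mul_inv_cancel (ENNReal.ofReal_pos.2 (sub_pos.2 hsqrt)).ne'
          ENNReal.ofReal_ne_top

lemma tsum_walkProb_mul_of_head?_eq (hI : ∀ v, (I v).Nonempty) (hc1 : c < 1) (u : V)
    {g : List V → ℝ≥0∞} {a : ℝ≥0∞} (hg : ∀ w, w.head? = some u → g w = a) :
    ∑' w, walkProb I c u w * g w = a := by
  have hterm (w : List V) : walkProb I c u w * g w = walkProb I c u w * a := by
    by_cases hw : w.head? = some u
    · rw [hg w hw]
    · simp [walkProb_eq_zero_of_head?_ne hw]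
  rw [tsum_congr hterm, ENNReal.tsum_mul_right, tsum_walkProb_eq_one hI hc1, one_mul]

lemma Score_nonneg (q : List V) (j : ℕ) (x : V) : 0 ≤ Score I c q j x := by
  induction j generalizing x with
  | zero => rw [Score]; positivity
  | succ j ih =>
    rw [Score]
    split
    · exact le_rfl
    · exact Finset.sum_nonneg fun b _ => mul_nonneg (by positivity) (ih b)

/-- With `q = (u_i, …, u_1)` as in `Score`, `MeetsAt q (i - 1) w` says that `w` meets
`(u_1, …, u_i)` in matching steps for the first time at its `i`-th entry. -/
def MeetsAt (q : List V) (j : ℕ) (w : List V) : Prop :=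
  j < w.length ∧ w[j]? = q[0]? ∧ ∀ m < j, w[m]? ≠ q[j - m]?

lemma meetsAt_zero_iff {q w : List V} {x : V} (hw : w.head? = some x) :
    MeetsAt q 0 w ↔ q[0]? = some x := by
  obtain ⟨t, rfl⟩ : ∃ t, w = x :: t := by
    cases w with
    | nil => simp at hw
    | cons a t => exact ⟨t, by simpa using hw⟩
  simp [MeetsAt, eq_comm]

lemma not_meetsAt_succ_singleton (q : List V) (j : ℕ) (x : V) : ¬ MeetsAt q (j + 1) [x] := by
  simp [MeetsAt]

lemma meetsAt_succ_cons_iff (q : List V) (j : ℕ) (x : V) (w : List V) :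
    MeetsAt q (j + 1) (x :: w) ↔ q[j + 1]? ≠ some x ∧ MeetsAt q j w := by
  simp only [MeetsAt, List.length_cons, add_lt_add_iff_right, List.getElem?_cons_succ]
  constructor
  · rintro ⟨hlen, heq, hall⟩
    refine ⟨fun h => hall 0 j.succ_pos (by simpa using h.symm), hlen, heq, fun m hm => ?_⟩
    simpa using hall (m + 1) (by omega)
  · rintro ⟨hx, hlen, heq, hall⟩
    refine ⟨hlen, heq, fun m hm => ?_⟩
    cases m with
    | zero => simpa [eq_comm] using hx
    | succ m => simpa using hall m (by omega)

lemma ofReal_Score_eq_tsum (hI : ∀ v, (I v).Nonempty) (hc1 : c < 1) (q : List V) (j : ℕ)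
    (x : V) :
    ENNReal.ofReal (Score I c q j x) =
      ∑' w, walkProb I c x w * (if MeetsAt q j w then 1 else 0) := by
  induction j generalizing x with
  | zero =>
    have hhead (w : List V) (hw : w.head? = some x) :
        (if MeetsAt q 0 w then (1 : ℝ≥0∞) else 0) = if q[0]? = some x then 1 else 0 := by
      simp only [meetsAt_zero_iff hw]
    rw [tsum_walkProb_mul_of_head?_eq hI hc1 x hhead, Score, List.head?_eq_getElem?]
    split <;> simp
  | succ j ih =>
    rw [tsum_walkProb_mul_eq x, Score]
    simp only [not_meetsAt_succ_singleton, if_false, mul_zero, zero_add]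
    simp only [meetsAt_succ_cons_iff]
    split
    case isTrue hq => simp [hq]
    case isFalse hq =>
      rw [ENNReal.ofReal_sum_of_nonneg fun b _ => mul_nonneg (by positivity) (Score_nonneg q j b)]
      simp only [ne_eq, hq, not_false_eq_true, true_and, ← ih]
      exact Finset.sum_congr rfl fun b _ => ENNReal.ofReal_mul (by positivity)

lemma meetsAt_reverse_take_iff {p : List V} {j : ℕ} (hj : j < p.length) (w : List V) :
    MeetsAt (p.take (j + 1)).reverse j w ↔
      j < w.length ∧ w[j]? = p[j]? ∧ ∀ m < j, w[m]? ≠ p[m]? := by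
  have hrev {m : ℕ} (hm : m ≤ j) : (p.take (j + 1)).reverse[m]? = p[j - m]? := by
    rw [List.getElem?_reverse (by simp; omega), List.length_take_of_le (by omega),
      List.getElem?_take_of_lt (by omega), Nat.add_sub_cancel]
  simp only [MeetsAt, hrev (Nat.zero_le j), Nat.sub_zero]
  refine and_congr_right fun _ => and_congr_right fun _ => forall₂_congr fun m hm => ?_
  rw [hrev (Nat.sub_le j m), Nat.sub_sub_self hm.le]

lemma meetsAt_reverse_take_iff_first (hw : w.head? = some v) (hv : p.head? ≠ some v) {i : ℕ}
    (hi : i ∈ Finset.Icc 2 p.length) :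
    MeetsAt (p.take i).reverse (i - 1) w ↔
      (i ≤ w.length ∧ w[i - 1]? = p[i - 1]?) ∧
        ∀ k ∈ Finset.Icc 2 p.length, k < i → ¬ (k ≤ w.length ∧ w[k - 1]? = p[k - 1]?) := by
  obtain ⟨hi2, hip⟩ := Finset.mem_Icc.1 hi
  obtain ⟨j, rfl⟩ : ∃ j, i = j + 1 := ⟨i - 1, by omega⟩
  rw [Nat.add_sub_cancel, meetsAt_reverse_take_iff (by omega), Nat.add_one_le_iff, and_assoc]
  refine and_congr_right fun hjw => and_congr_right fun _ => ⟨?_, ?_⟩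
  · intro hne k hk hkj ⟨_, heq⟩
    exact hne (k - 1) (by simp at hk; omega) heq
  · intro hfirst m hm heq
    cases m with
    | zero => exact hv (by rwa [List.head?_eq_getElem?, ← heq, ← List.head?_eq_getElem?])
    | succ m => exact hfirst (m + 2) (by simp; omega) (by omega) ⟨by omega, heq⟩

lemma ofReal_estimator_eq_tsum (hI : ∀ v, (I v).Nonempty) (hc1 : c < 1)
    (hv : p.head? ≠ some v) :
    ENNReal.ofReal (estimator I c p v) =
      ∑' w, walkProb I c v w *
        (if ∃ k, 2 ≤ k ∧ k ≤ p.length ∧ k ≤ w.length ∧ w[k - 1]? = p[k - 1]? then 1 else 0) := by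
  rw [estimator, ENNReal.ofReal_sum_of_nonneg fun i _ => Score_nonneg _ _ _]
  simp only [ofReal_Score_eq_tsum hI hc1]
  rw [← Summable.tsum_finsetSum fun _ _ => ENNReal.summable]
  refine tsum_congr fun w => ?_
  rw [← Finset.mul_sum]
  by_cases hw : w.head? = some v
  · rw [Finset.sum_congr rfl fun i hi =>
        if_congr (meetsAt_reverse_take_iff_first hw hv hi) rfl rfl,
      Finset.sum_boole_first_eq_boole_exists]
    simp only [Finset.mem_Icc, and_assoc]
  · simp [walkProb_eq_zero_of_head?_ne hw]

end SqrtCWalk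

theorem estimator_eq_meet_prob_general
    (I : V → Finset V) (hI : ∀ v, (I v).Nonempty)
    (c : ℝ) (hc1 : c < 1)
    (p : List V)
    (v : V) (hv : p.head? ≠ some v) :
    estimator I c p v =
        (∑' w : List V,
          walkWeight I c v w *
            (if ∃ k, 2 ≤ k ∧ k ≤ p.length ∧ k ≤ w.length ∧ w[k - 1]? = p[k - 1]?
             then 1 else 0)) ∧
      0 ≤ estimator I c p v ∧ estimator I c p v ≤ 1 := by
  set E : List V → Prop := fun w =>
    ∃ k, 2 ≤ k ∧ k ≤ p.length ∧ k ≤ w.length ∧ w[k - 1]? = p[k - 1]?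
  have hmain := ofReal_estimator_eq_tsum hI hc1 hv
  have hnonneg : 0 ≤ estimator I c p v := Finset.sum_nonneg fun _ _ => Score_nonneg _ _ _
  have hterm (w : List V) : walkProb I c v w * (if E w then 1 else 0) =
      ENNReal.ofReal (walkWeight I c v w * if E w then 1 else 0) := by
    rw [ENNReal.ofReal_mul (walkWeight_nonneg hc1.le v w), walkProb]
    split <;> simp
  refine ⟨?_, hnonneg, ?_⟩
  · rw [← ENNReal.toReal_ofReal hnonneg, hmain, tsum_congr hterm,
      ENNReal.tsum_toReal_eq fun _ => ENNReal.ofReal_ne_top]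
    exact tsum_congr fun w => ENNReal.toReal_ofReal
      (mul_nonneg (walkWeight_nonneg hc1.le v w) (by positivity))
  · rw [← ENNReal.ofReal_le_one, hmain]
    refine le_trans ?_ (tsum_walkProb_eq_one hI hc1 v).le
    exact ENNReal.tsum_le_tsum fun w => mul_le_of_le_one_right' (by split <;> simp)

/-- For a fixed sequence `W = p = (u_1,…,u_ℓ)` with `u_{k+1} ∈ I(u_k)` and
`v ≠ u_1`, the single-trial estimator `s̃_W(v)` equals the probability that a
`√c`-walk from `v` has, for some `2 ≤ k ≤ ℓ`, length at least `k` with its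
`k`-th entry equal to `u_k`; in particular `0 ≤ s̃_W(v) ≤ 1`. -/
theorem estimator_eq_meet_prob [Fintype V]
    (I : V → Finset V) (hI : ∀ v, (I v).Nonempty)
    (c : ℝ) (hc0 : 0 < c) (hc1 : c < 1)
    (p : List V) (hchain : List.Chain' (fun a b => b ∈ I a) p)
    (v : V) (hv : p.head? ≠ some v) :
    estimator I c p v =
        (∑' w : List V,
          walkWeight I c v w *
            (if ∃ k, 2 ≤ k ∧ k ≤ p.length ∧ k ≤ w.length ∧ w[k - 1]? = p[k - 1]?
             then 1 else 0)) ∧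
      0 ≤ estimator I c p v ∧ estimator I c p v ≤ 1 :=
  estimator_eq_meet_prob_general I hI c hc1 p v hv
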